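/- arXiv:0810.5206 — 3 statements merged into one kernel-verified Lean document; each statement's English description precedes it below -/
import Mathlib

section
/- A linear combination of n Dirac delta functions with nonzero weights at distinct points in [0,1] is uniquely determined by its moments m_0,...,m_{2n-1}: if Σ_{i=1}^n A_i x_i^k = Σ_{i=1}^n B_i y_i^k for k = 0,...,2n-1, where x_1,...,x_n are distinct, y_1,...,y_n are distinct, and all A_i, B_i are nonzero, then the multisets of (weight, point) pairs coincide. -/
/-!
Encode `∑ A i δ_{x i}` as the finitely supported function `s ↦ ∑_{x i = s} A i`. The difference of
the two combinations is supported on at most `2n` points, and its moments of order `< 2n` vanish;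
a Vandermonde matrix on its support is invertible, so the difference is zero. With distinct points
and nonzero weights, the pairs `(A i, x i)` are exactly the graph of the combination.
-/

open Finset

noncomputable def diracCombination {ι α M : Type*} [Fintype ι] [AddCommMonoid M]
    (A : ι → M) (x : ι → α) : α →₀ M :=
  ∑ i, Finsupp.single (x i) (A i)

def moment {R : Type*} [CommRing R] (k : ℕ) (f : R →₀ R) : R :=
  f.sum fun s a => a * s ^ k

section DiracCombination

variable {ι α M : Type*} [Fintype ι] [AddCommMonoid M] {A : ι → M} {x : ι → α}

theorem diracCombination_apply_self (hx : Function.Injective x) (i : ι) :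
    diracCombination A x (x i) = A i := by
  rw [diracCombination, Finsupp.finsetSum_apply, sum_eq_single i]
  · exact Finsupp.single_eq_same
  · exact fun j _ hji => Finsupp.single_eq_of_ne (hx.ne hji).symm
  · exact fun hi => absurd (mem_univ i) hi

theorem mem_range_of_diracCombination_apply_ne_zero {s : α} (hs : diracCombination A x s ≠ 0) :
    s ∈ Set.range x := by
  contrapose! hs
  rw [diracCombination, Finsupp.finsetSum_apply]
  exact sum_eq_zero fun i _ => Finsupp.single_eq_of_ne fun h => hs ⟨i, h.symm⟩

theorem card_support_diracCombination_le (A : ι → M) (x : ι → α) :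
    #(diracCombination A x).support ≤ Fintype.card ι := by
  classical
  calc #(diracCombination A x).support ≤ #(univ.image x) := by
        refine card_le_card fun s hs => ?_
        obtain ⟨i, rfl⟩ :=
          mem_range_of_diracCombination_apply_ne_zero (Finsupp.mem_support_iff.mp hs)
        exact mem_image_of_mem x (mem_univ i)
    _ ≤ Fintype.card ι := card_image_le

theorem diracCombination_graph_swap (hx : Function.Injective x) (hA : ∀ i, A i ≠ 0) :
    (diracCombination A x).graph.val.map Prod.swap = univ.val.map fun i => (A i, x i) := by
  refine (Multiset.Nodup.ext ((nodup _).map Prod.swap_injective)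
    ((nodup _).map fun i j hij => hx (Prod.ext_iff.mp hij).2)).mpr fun ⟨a, s⟩ => ?_
  simp only [Multiset.mem_map, Finsupp.mem_graph_iff, Prod.exists, Prod.swap_prod_mk, Prod.mk.injEq,
    mem_val, mem_univ, true_and]
  constructor
  · rintro ⟨s, a, ⟨hsa, ha⟩, rfl, rfl⟩
    obtain ⟨i, rfl⟩ := mem_range_of_diracCombination_apply_ne_zero (hsa ▸ ha)
    exact ⟨i, (diracCombination_apply_self hx i).symm.trans hsa, rfl⟩
  · rintro ⟨i, rfl, rfl⟩
    exact ⟨x i, A i, ⟨diracCombination_apply_self hx i, hA i⟩, rfl, rfl⟩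

end DiracCombination

section Moment

variable {R : Type*} [CommRing R]

theorem moment_sub (k : ℕ) (f g : R →₀ R) : moment k (f - g) = moment k f - moment k g :=
  Finsupp.sum_sub_index fun _ _ _ => sub_mul _ _ _

theorem moment_diracCombination {ι : Type*} [Fintype ι] (k : ℕ) (A x : ι → R) :
    moment k (diracCombination A x) = ∑ i, A i * x i ^ k := by
  rw [moment, diracCombination,
    ← Finsupp.sum_finsetSum_index (fun _ => zero_mul _) fun _ _ _ => add_mul _ _ _]
  exact sum_congr rfl fun i _ => Finsupp.sum_single_index (zero_mul _)

theorem eq_zero_of_moment_eq_zero [IsDomain R] {f : R →₀ R}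
    (h : ∀ k < #f.support, moment k f = 0) : f = 0 := by
  by_contra hf
  let e := f.support.equivFin.symm
  have hzero : (fun j => f (e j)) = 0 := by
    refine Matrix.eq_zero_of_forall_pow_sum_mul_pow_eq_zero (f := fun j => (e j : R))
      (Subtype.val_injective.comp e.injective) fun k => ?_
    rw [← h k k.isLt, moment, Finsupp.sum, ← sum_coe_sort f.support]
    exact e.sum_comp fun s : f.support => f s * (s : R) ^ (k : ℕ)
  obtain ⟨s, hs⟩ := Finsupp.support_nonempty_iff.mpr hf
  exact Finsupp.mem_support_iff.mp hs (by simpa [e] using congrFun hzero (e.symm ⟨s, hs⟩))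

end Moment

theorem delta_combination_unique_general (n : ℕ) (A B : Fin n → ℝ) (x y : Fin n → ℝ)
    (hxd : Function.Injective x) (hyd : Function.Injective y)
    (hA : ∀ i, A i ≠ 0) (hB : ∀ i, B i ≠ 0)
    (h : ∀ k < 2 * n, ∑ i, A i * (x i) ^ k = ∑ i, B i * (y i) ^ k) :
    (Finset.univ.val.map fun i => (A i, x i)) = (Finset.univ.val.map fun i => (B i, y i)) := by
  classical
  have hcard : #(diracCombination A x - diracCombination B y).support ≤ 2 * n := by
    grw [Finsupp.support_sub, card_union_le, card_support_diracCombination_le,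
      card_support_diracCombination_le, Fintype.card_fin, two_mul]
  have hAB : diracCombination A x = diracCombination B y :=
    sub_eq_zero.mp <| eq_zero_of_moment_eq_zero fun k hk => by
      rw [moment_sub, moment_diracCombination, moment_diracCombination, h k (hk.trans_le hcard),
        sub_self]
  rw [← diracCombination_graph_swap hxd hA, ← diracCombination_graph_swap hyd hB, hAB]

theorem delta_combination_unique (n : ℕ) (A B : Fin n → ℝ) (x y : Fin n → ℝ)
    (hx : ∀ i, x i ∈ Set.Icc (0:ℝ) 1) (hy : ∀ i, y i ∈ Set.Icc (0:ℝ) 1)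
    (hxd : Function.Injective x) (hyd : Function.Injective y)
    (hA : ∀ i, A i ≠ 0) (hB : ∀ i, B i ≠ 0)
    (h : ∀ k < 2 * n, ∑ i, A i * (x i) ^ k = ∑ i, B i * (y i) ^ k) :
    (Finset.univ.val.map fun i => (A i, x i)) = (Finset.univ.val.map fun i => (B i, y i)) :=
  delta_combination_unique_general n A B x y hxd hyd hA hB h
end

section
/- If g : [0,1] → ℝ is integrable, not almost-everywhere zero, and has at most s sign changes (i.e., there exist points t_1 < ... < t_l with l ≤ s such that g has constant sign on each complementary interval, with signs alternating or arbitrary), then at least one of the moments m_j(g) = ∫_0^1 x^j g(x) dx for j = 0,...,s is nonzero. -/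
/-!
If all moments of order `≤ s` vanish, then `∫ p g = 0` for every polynomial `p` of degree `≤ s`.
Multiplying by a factor `(t_k - X)` at each sign change `t_k` of `g` gives a nonzero polynomial
`p` of degree `≤ l ≤ s` with `p g ≥ 0` a.e. on `[0,1]`, so `p g = 0` a.e.; as `p` has only finitely
many roots, `g = 0` a.e.
-/

open MeasureTheory Polynomial

theorem monotoneOn_Iic_of_le_succ {α : Type*} [Preorder α] {f : ℕ → α} {n : ℕ}
    (hf : ∀ i < n, f i ≤ f (i + 1)) : MonotoneOn f (Set.Iic n) := by
  have hmono : Monotone fun i => f (min i n) := monotone_nat_of_le_succ fun i => by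
    rcases lt_or_ge i n with h | h
    · rw [min_eq_left h.le, min_eq_left h]
      exact hf i h
    · rw [min_eq_right h, min_eq_right (by omega)]
  intro a ha b hb hab
  simpa [min_eq_left (Set.mem_Iic.1 ha), min_eq_left (Set.mem_Iic.1 hb)] using hmono hab

theorem Polynomial.exists_natDegree_le_sign_pattern (t σ : ℕ → ℝ)
    (hσ : ∀ i, σ i = 1 ∨ σ i = -1) (n : ℕ) (ht : MonotoneOn t (Set.Iic n)) :
    ∃ p : ℝ[X], p.natDegree ≤ n ∧
      ∀ i ≤ n, ∀ x, t i < x → (i < n → x < t (i + 1)) → 0 < σ i * p.eval x := by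
  induction n with
  | zero =>
    refine ⟨C (σ 0), (natDegree_C _).le, fun i hi x _ _ => ?_⟩
    obtain rfl : i = 0 := Nat.le_zero.1 hi
    rcases hσ 0 with h | h <;> simp [h]
  | succ n ih =>
    obtain ⟨p, hdeg, hp⟩ := ih (ht.mono (Set.Iic_subset_Iic.2 n.le_succ))
    have hleft : ∀ i ≤ n, ∀ x, t i < x → x < t (i + 1) →
        0 < σ i * p.eval x ∧ x < t (n + 1) := fun i hi x hx hx' =>
      ⟨hp i hi x hx fun _ => hx', hx'.trans_le <| ht (by simp; omega) (by simp) (by omega)⟩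
    have hright : ∀ x, t (n + 1) < x → 0 < σ n * p.eval x := fun x hx =>
      hp n le_rfl x ((ht (by simp) (by simp) n.le_succ).trans_lt hx) (absurd · (lt_irrefl n))
    rcases eq_or_ne (σ (n + 1)) (σ n) with hsame | hflip
    · refine ⟨p, hdeg.trans n.le_succ, fun i hi x hx hx' => ?_⟩
      rcases Nat.of_le_succ hi with hi | rfl
      · exact (hleft i hi x hx (hx' (by omega))).1
      · exact hsame ▸ hright x hx
    · have hneg : σ (n + 1) = -σ n := by
        rcases hσ (n + 1) with h | h <;> rcases hσ n with h' | h' <;>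
          simp_all
      refine ⟨p * (C (t (n + 1)) - X), ?_, fun i hi x hx hx' => ?_⟩
      · exact natDegree_mul_le.trans (add_le_add hdeg ((natDegree_sub_le _ _).trans (by simp)))
      rw [eval_mul, eval_sub, eval_C, eval_X]
      rcases Nat.of_le_succ hi with hi | rfl
      · obtain ⟨hpos, hlt⟩ := hleft i hi x hx (hx' (by omega))
        rw [← mul_assoc]
        exact mul_pos hpos (sub_pos.2 hlt)
      · rw [hneg, show -σ n * (p.eval x * (t (n + 1) - x))
            = σ n * p.eval x * (x - t (n + 1)) by ring]
        exact mul_pos (hright x hx) (sub_pos.2 hx)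

theorem ae_restrict_Ioc_of_forall_Ioo {μ : Measure ℝ} [NullSingletonClass μ] {P : ℝ → Prop}
    {t : ℕ → ℝ} (n : ℕ) (ht : MonotoneOn t (Set.Iic (n + 1)))
    (h : ∀ i ≤ n, ∀ᵐ x ∂μ.restrict (Set.Ioo (t i) (t (i + 1))), P x) :
    ∀ᵐ x ∂μ.restrict (Set.Ioc (t 0) (t (n + 1))), P x := by
  induction n with
  | zero => simpa [Measure.restrict_congr_set Ioo_ae_eq_Ioc] using h 0 le_rfl
  | succ n ih =>
    have h0 : t 0 ≤ t (n + 1) := ht (by simp) (by simp) (Nat.zero_le _)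
    have h1 : t (n + 1) ≤ t (n + 2) := ht (by simp) (by simp) (by omega)
    rw [← Set.Ioc_union_Ioc_eq_Ioc h0 h1, ae_restrict_union_iff]
    refine ⟨ih (ht.mono (Set.Iic_subset_Iic.2 (by omega))) fun i hi => h i (by omega), ?_⟩
    rw [← Measure.restrict_congr_set Ioo_ae_eq_Ioc]
    exact h (n + 1) le_rfl

theorem intervalIntegral.integral_polynomial_mul_eq_zero {g : ℝ → ℝ} {a b : ℝ} {s : ℕ}
    (hg : IntervalIntegrable g volume a b) (hmom : ∀ j ≤ s, ∫ x in a..b, x ^ j * g x = 0)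
    {p : ℝ[X]} (hp : p.natDegree ≤ s) : ∫ x in a..b, p.eval x * g x = 0 := by
  have hexpand : ∀ x, p.eval x * g x = ∑ j ∈ Finset.range (s + 1), p.coeff j * (x ^ j * g x) :=
    fun x => by
      rw [eval_eq_sum_range' (Nat.lt_succ_of_le hp), Finset.sum_mul]
      exact Finset.sum_congr rfl fun j _ => by ring
  simp_rw [hexpand]
  rw [intervalIntegral.integral_finsetSum fun j _ =>
    (hg.continuousOn_mul (continuous_pow j).continuousOn).const_mul _]
  refine Finset.sum_eq_zero fun j hj => ?_
  rw [intervalIntegral.integral_const_mul, hmom j (Nat.lt_succ_iff.1 (Finset.mem_range.1 hj)),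
    mul_zero]

theorem Polynomial.ae_eq_zero_of_eval_mul_ae_eq_zero {μ : Measure ℝ} [NullSingletonClass μ]
    {p : ℝ[X]} (hp : p ≠ 0) {f : ℝ → ℝ} (h : (fun x => p.eval x * f x) =ᵐ[μ] 0) : f =ᵐ[μ] 0 := by
  have hroots : ∀ᵐ x ∂μ, p.eval x ≠ 0 :=
    measure_eq_zero_iff_ae_notMem.1 ((finite_setOfPred_isRoot hp).measure_zero μ)
  filter_upwards [h, hroots] with x hx hpx
  exact (mul_eq_zero.1 hx).resolve_left hpx

theorem exists_sign_mul_ae_nonneg {α : Type*} [MeasurableSpace α] {μ : Measure α} {g : α → ℝ}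
    (h : (∀ᵐ x ∂μ, 0 ≤ g x) ∨ ∀ᵐ x ∂μ, g x ≤ 0) :
    ∃ c : ℝ, (c = 1 ∨ c = -1) ∧ ∀ᵐ x ∂μ, 0 ≤ c * g x := by
  rcases h with h | h
  · exact ⟨1, Or.inl rfl, by simpa using h⟩
  · exact ⟨-1, Or.inr rfl, by simpa using h⟩

theorem sign_changes_nonvanishing_moment (s l : ℕ) (hl : l ≤ s) (g : ℝ → ℝ)
    (hg : IntegrableOn g (Set.Icc 0 1))
    (hg0 : ¬ g =ᵐ[volume.restrict (Set.Icc (0:ℝ) 1)] 0)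
    (t : ℕ → ℝ) (ht0 : t 0 = 0) (ht1 : t (l + 1) = 1)
    (htm : ∀ i ≤ l, t i < t (i + 1))
    (hsign : ∀ i ≤ l,
      (∀ᵐ x ∂(volume.restrict (Set.Ioo (t i) (t (i + 1)))), 0 ≤ g x) ∨
      (∀ᵐ x ∂(volume.restrict (Set.Ioo (t i) (t (i + 1)))), g x ≤ 0)) :
    ∃ j ≤ s, (∫ x in (0:ℝ)..1, x ^ j * g x) ≠ 0 := by
  by_contra! hmom
  have ht : MonotoneOn t (Set.Iic (l + 1)) :=
    monotoneOn_Iic_of_le_succ fun i hi => (htm i (Nat.lt_succ_iff.1 hi)).le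
  have hσ : ∀ i, ∃ c : ℝ, (c = 1 ∨ c = -1) ∧
      (i ≤ l → ∀ᵐ x ∂(volume.restrict (Set.Ioo (t i) (t (i + 1)))), 0 ≤ c * g x) := fun i =>
    if hi : i ≤ l then
      (exists_sign_mul_ae_nonneg (hsign i hi)).imp fun _ hc => ⟨hc.1, fun _ => hc.2⟩
    else ⟨1, Or.inl rfl, fun h => absurd h hi⟩
  choose σ hσ hσg using hσ
  obtain ⟨p, hpdeg, hpσ⟩ := exists_natDegree_le_sign_pattern t σ hσ l (ht.mono (by simp))
  have hp0 : p ≠ 0 := fun h => by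
    simpa [h] using hpσ l le_rfl (t l + 1) (lt_add_one _) fun h => absurd h (lt_irrefl l)
  have hpg : ∀ᵐ x ∂volume.restrict (Set.Ioc 0 1), 0 ≤ p.eval x * g x := by
    have := ae_restrict_Ioc_of_forall_Ioo (μ := volume) (P := fun x => 0 ≤ p.eval x * g x) l ht
      fun i hi => by
        filter_upwards [hσg i hi, ae_restrict_mem measurableSet_Ioo] with x hgx hx
        have hpx := hpσ i hi x hx.1 fun _ => hx.2
        -- `σ i ^ 2 = 1`, so `p x * g x = (σ i * p x) * (σ i * g x)`
        rcases hσ i with h | h <;> rw [h] at hgx hpx <;> nlinarith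
    rwa [ht0, ht1] at this
  have hgi : IntervalIntegrable g volume 0 1 :=
    (intervalIntegrable_iff_integrableOn_Icc_of_le zero_le_one).2 hg
  have hpgi : IntervalIntegrable (fun x => p.eval x * g x) volume 0 1 :=
    hgi.continuousOn_mul p.continuous.continuousOn
  have hpg0 := (intervalIntegral.integral_eq_zero_iff_of_le_of_nonneg_ae zero_le_one hpg hpgi).1
    (intervalIntegral.integral_polynomial_mul_eq_zero hgi hmom (hpdeg.trans hl))
  refine hg0 ?_
  rw [← Measure.restrict_congr_set Ioc_ae_eq_Icc]
  exact ae_eq_zero_of_eval_mul_ae_eq_zero hp0 hpg0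
end

section
/- If P, W_1, W_2 are polynomials such that P = U_1 ∘ W_1 = U_2 ∘ W_2 for some polynomials U_1, U_2, and W_1(0) = W_1(1), W_2(0) = W_2(1), then for Q = W_1 + W_2 all moments ∫_0^1 P(t)^k Q(t) P'(t) dt vanish for every k ≥ 0. -/
/-! If `P = U ∘ W`, then `φ(P) · W · P' = g(W) · W'` with `g(u) = φ(U(u)) · u · U'(u)`, so the
substitution `u = W(t)` turns the integral over `[0, 1]` into one over
`[W(0), W(1)]`, which is empty when `W(0) = W(1)`. The claim for `Q = W₁ + W₂` follows by linearity. -/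

open Polynomial intervalIntegral MeasureTheory

theorem Polynomial.integral_comp_mul_derivative_eq_zero {a b : ℝ} {g : ℝ → ℝ}
    (hg : Continuous g) (W : ℝ[X]) (hW : W.eval a = W.eval b) :
    ∫ t in a..b, g (W.eval t) * W.derivative.eval t = 0 := by
  have := integral_comp_mul_deriv (a := a) (b := b) (fun t _ => W.hasDerivAt t)
    W.derivative.continuous.continuousOn hg
  simpa [hW] using this

theorem Polynomial.integral_comp_mul_mul_derivative_eq_zero {a b : ℝ} {φ : ℝ → ℝ}
    (hφ : Continuous φ) {P U W : ℝ[X]} (h : P = U.comp W) (hW : W.eval a = W.eval b) :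
    ∫ t in a..b, φ (P.eval t) * W.eval t * P.derivative.eval t = 0 := by
  have hg : Continuous fun u => φ (U.eval u) * u * U.derivative.eval u := by fun_prop
  rw [← W.integral_comp_mul_derivative_eq_zero hg hW]
  congr 1 with t
  simp only [h, eval_comp, derivative_comp, eval_mul]
  ring

theorem two_factors_moments_vanish (P W₁ W₂ U₁ U₂ : Polynomial ℝ)
    (h1 : P = U₁.comp W₁) (h2 : P = U₂.comp W₂)
    (hW1 : W₁.eval 0 = W₁.eval 1) (hW2 : W₂.eval 0 = W₂.eval 1) (k : ℕ) :
    ∫ t in (0:ℝ)..1, P.eval t ^ k * (W₁ + W₂).eval t * P.derivative.eval t = 0 := by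
  have hφ : Continuous fun x : ℝ => x ^ k := continuous_pow k
  have hint (W : ℝ[X]) :
      IntervalIntegrable (fun t => P.eval t ^ k * W.eval t * P.derivative.eval t) volume 0 1 :=
    Continuous.intervalIntegrable (by fun_prop) 0 1
  simp only [eval_add, mul_add, add_mul]
  rw [integral_add (hint W₁) (hint W₂),
    integral_comp_mul_mul_derivative_eq_zero hφ h1 hW1,
    integral_comp_mul_mul_derivative_eq_zero hφ h2 hW2, add_zero]
end
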